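/- arXiv:0801.0667 — 4 statements merged into one kernel-verified Lean document; each statement's English description precedes it below -/
import Mathlib

section
/- With the setup of a finite graph (V, E, involution x ↦ x̄, maps o, t with o(x̄) = t(x), o surjective) and an abelian group M with no (n₀ - n₁)-torsion (where n₀ = |V| and n₁ = |E|/2), any function λ : E → M and element σ ∈ M satisfying the flow relations (∑_{o(x)=v} λ(x) = σ for every v ∈ V, and λ(x) + λ(x̄) = σ for every x ∈ E) must have σ = 0. -/
/-!
Sum `λ` over all directed edges in two ways. Grouping the edges by origin gives `n₀ • σ`.
Choosing an orientation, i.e. one edge out of each pair `{x, x̄}`, splits `E` into `n₁` pairs on each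
of which `λ` sums to `σ`, so the total is also `n₁ • σ`. Hence `(n₀ - n₁) • σ = 0`.
-/

open Finset Function

namespace Function.Involutive

variable {E : Type*} [Fintype E] {bar : E → E}

theorem exists_finset_forall_mem_iff_notMem [DecidableEq E] (h : Involutive bar)
    (hfree : ∀ x, bar x ≠ x) : ∃ S : Finset E, ∀ x, bar x ∈ S ↔ x ∉ S := by
  let _ : LinearOrder E := LinearOrder.lift' (Fintype.equivFin E) (Fintype.equivFin E).injective
  refine ⟨univ.filter fun x => x < bar x, fun x => ?_⟩
  simp only [mem_filter, mem_univ, true_and, h x, not_lt]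
  exact ⟨le_of_lt, fun hle => lt_of_le_of_ne hle (hfree x)⟩

variable [DecidableEq E] (h : Involutive bar) {S : Finset E} (hS : ∀ x, bar x ∈ S ↔ x ∉ S)
include h hS

theorem two_mul_card_eq_card : 2 * #S = Fintype.card E := by
  have hcompl : #S = #Sᶜ :=
    card_nbij' bar bar (fun x hx => by simpa [hS] using hx)
      (fun x hx => by simpa [hS, h x] using hx) (fun x _ => h x) (fun x _ => h x)
  rw [two_mul, ← card_add_card_compl S, ← hcompl]

theorem sum_eq_card_nsmul {M : Type*} [AddCommMonoid M] {f : E → M} {c : M}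
    (hf : ∀ x, f x + f (bar x) = c) : ∑ x, f x = #S • c := by
  have hbar : ∑ x ∈ S, f (bar x) = ∑ x ∈ Sᶜ, f x :=
    sum_nbij' bar bar (fun x hx => by simpa [hS] using hx)
      (fun x hx => by simpa [hS, h x] using hx) (fun x _ => h x) (fun x _ => h x)
      (fun x _ => rfl)
  rw [← sum_add_sum_compl S f, ← hbar, ← sum_add_distrib, sum_congr rfl fun x _ => hf x,
    sum_const]

end Function.Involutive

theorem Function.Involutive.sum_eq_nsmul_of_add_eq {E M : Type*} [Fintype E] [AddCommMonoid M]
    {bar : E → E} (h : Involutive bar) (hfree : ∀ x, bar x ≠ x) {f : E → M} {c : M}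
    (hf : ∀ x, f x + f (bar x) = c) {n : ℕ} (hn : 2 * n = Fintype.card E) :
    ∑ x, f x = n • c := by
  classical
  obtain ⟨S, hS⟩ := h.exists_finset_forall_mem_iff_notMem hfree
  have hcard : #S = n := by have := h.two_mul_card_eq_card hS; omega
  rw [h.sum_eq_card_nsmul hS hf, hcard]

theorem stmt_1_general {V E : Type*} [Fintype V] [Fintype E] [DecidableEq V]
    (bar : E → E) (o : E → V)
    (hinv : ∀ x, bar (bar x) = x) (hfree : ∀ x, bar x ≠ x)
    {M : Type*} [AddCommGroup M]
    (n0 n1 : ℕ) (hn0 : n0 = Fintype.card V) (hn1 : 2 * n1 = Fintype.card E)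
    (htor : ∀ m : M, ((n0 : ℤ) - (n1 : ℤ)) • m = 0 → m = 0)
    (lam : E → M) (σ : M)
    (ha : ∀ v : V, ∑ x ∈ Finset.univ.filter (fun x => o x = v), lam x = σ)
    (hb : ∀ x : E, lam x + lam (bar x) = σ) :
    σ = 0 := by
  have hvertices : ∑ x, lam x = n0 • σ := by
    rw [← sum_fiberwise univ o lam, sum_congr rfl fun v _ => ha v, sum_const, card_univ, hn0]
  have hedges : ∑ x, lam x = n1 • σ :=
    Involutive.sum_eq_nsmul_of_add_eq hinv hfree hb hn1
  apply htor
  rw [sub_zsmul, natCast_zsmul, natCast_zsmul, ← hvertices, ← hedges, add_neg_cancel]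

/-- With the same graph setup, if M has no (n₀ - n₁)-torsion then any σ-flow
(λ, σ) satisfying the flow relations must have σ = 0. -/
theorem stmt_1 {V E : Type*} [Fintype V] [Fintype E] [DecidableEq V]
    (bar : E → E) (o t : E → V)
    (hinv : ∀ x, bar (bar x) = x) (hfree : ∀ x, bar x ≠ x)
    (hot : ∀ x, o (bar x) = t x)
    {M : Type*} [AddCommGroup M]
    (n0 n1 : ℕ) (hn0 : n0 = Fintype.card V) (hn1 : 2 * n1 = Fintype.card E)
    (htor : ∀ m : M, ((n0 : ℤ) - (n1 : ℤ)) • m = 0 → m = 0)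
    (lam : E → M) (σ : M)
    (ha : ∀ v : V, ∑ x ∈ Finset.univ.filter (fun x => o x = v), lam x = σ)
    (hb : ∀ x : E, lam x + lam (bar x) = σ)
    (hsurj : Function.Surjective o) :
    σ = 0 :=
  stmt_1_general bar o hinv hfree n0 n1 hn0 hn1 htor lam σ ha hb
end

section
/- Let (V, E) be a finite graph with reversal involution x ↦ x̄ and maps o, t with o(x̄) = t(x), and define (I - T*) on functions f : E → ℤ (equivalently on ℤE) by ((I - T*) applied to basis element x) = x + x̄ - ∑_{y : t(y) = o(x)} y. If α ∈ ℤ^{E₊} satisfies ∂α = 0 (α is a 1-cycle), and ᾱ denotes the image of α under the map induced by x ↦ x̄, then (I - T*)(α - ᾱ) = 0. -/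
/-!
Split the edges at a vertex `v` into the positively oriented ones and the reversals `x̄` of
positively oriented ones. Since `λ(x̄) = -λ(x)`, the sum of `λ` over the edges leaving `v` is the
outflow minus the inflow of `α` at `v`, which vanishes because `α` is a cycle. Together with
`λ(z) + λ(z̄) = 0` this kills every coordinate of `(I - T*)(α - ᾱ)`.
-/

open Finset

namespace OrientedGraph

variable {V E : Type*} {bar : E → E} (hinv : Function.Involutive bar)
  {Ep : Finset E} (hEp : ∀ x, x ∈ Ep ↔ bar x ∉ Ep)

include hinv hEp in
theorem bar_mem_of_notMem {x : E} (hx : x ∉ Ep) : bar x ∈ Ep :=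
  (hEp (bar x)).mpr (by rwa [hinv x])

variable [DecidableEq E]

/-- The coefficient function of `α - ᾱ` for `α = ∑_{x ∈ Ep} n x • x`. -/
def skewExtend (bar : E → E) (Ep : Finset E) (n : E → ℤ) (x : E) : ℤ :=
  if x ∈ Ep then n x else -n (bar x)

include hinv hEp in
theorem skewExtend_add_skewExtend_bar (n : E → ℤ) (x : E) :
    skewExtend bar Ep n x + skewExtend bar Ep n (bar x) = 0 := by
  by_cases hx : x ∈ Ep
  · simp [skewExtend, hx, (hEp x).mp hx, hinv x]
  · simp [skewExtend, hx, bar_mem_of_notMem hinv hEp hx]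

variable [DecidableEq V] [Fintype E] {o t : E → V} (hot : ∀ x, o (bar x) = t x)

include hinv hEp hot in
theorem sum_filter_origin_eq_add_sum_bar {M : Type*} [AddCommMonoid M] (f : E → M) (v : V) :
    ∑ x ∈ univ.filter (fun x => o x = v), f x
      = ∑ x ∈ Ep.filter (fun x => o x = v), f x
        + ∑ x ∈ Ep.filter (fun x => t x = v), f (bar x) := by
  rw [← sum_filter_add_sum_filter_not _ (· ∈ Ep), filter_filter, filter_filter]
  congr 1
  · exact sum_congr (by ext; simp [and_comm]) fun _ _ => rfl
  · refine sum_nbij' bar bar ?_ ?_ (fun x _ => hinv x) (fun x _ => hinv x)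
      (fun x _ => by rw [hinv x])
    all_goals
      intro x hx
      simp only [mem_filter, mem_univ, true_and] at hx ⊢
    · exact ⟨bar_mem_of_notMem hinv hEp hx.2, by rw [← hot, hinv x]; exact hx.1⟩
    · exact ⟨by rw [hot]; exact hx.2, by simpa using (hEp x).mp hx.1⟩

include hinv hEp hot in
theorem sum_filter_origin_skewExtend (n : E → ℤ) (v : V) :
    ∑ x ∈ univ.filter (fun x => o x = v), skewExtend bar Ep n x
      = ∑ x ∈ Ep.filter (fun x => o x = v), n x - ∑ x ∈ Ep.filter (fun x => t x = v), n x := by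
  rw [sum_filter_origin_eq_add_sum_bar hinv hEp hot, sub_eq_add_neg, ← sum_neg_distrib]
  congr 1
  · exact sum_congr rfl fun x hx => if_pos (mem_filter.mp hx).1
  · refine sum_congr rfl fun x hx => ?_
    rw [skewExtend, if_neg ((hEp x).mp (mem_filter.mp hx).1), hinv x]

end OrientedGraph

open OrientedGraph in
theorem stmt_4_general {V E : Type*} [Fintype E] [DecidableEq V] [DecidableEq E]
    (bar : E → E) (o t : E → V)
    (hinv : ∀ x, bar (bar x) = x)
    (hot : ∀ x, o (bar x) = t x)
    (Ep : Finset E) (hEp : ∀ x, x ∈ Ep ↔ bar x ∉ Ep)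
    (n : E → ℤ)
    (hcycle : ∀ v : V, (∑ x ∈ Ep.filter (fun x => t x = v), n x)
      - (∑ x ∈ Ep.filter (fun x => o x = v), n x) = 0)
    (lam : E → ℤ)
    (hlam : ∀ x : E, lam x = if x ∈ Ep then n x else - n (bar x)) :
    ∀ z : E, lam z + lam (bar z)
      - (∑ x ∈ Finset.univ.filter (fun x => o x = t z), lam x) = 0 := by
  obtain rfl : lam = skewExtend bar Ep n := funext hlam
  intro z
  rw [skewExtend_add_skewExtend_bar hinv hEp, sum_filter_origin_skewExtend hinv hEp hot]
  linarith [hcycle (t z)]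

/-- With (I - T*) given on basis elements by x ↦ x + x̄ - ∑_{y : t(y)=o(x)} y
(so on coefficient functions ((I-T*)f)(z) = f(z) + f(z̄) - ∑_{x : o(x)=t(z)} f(x)),
if α ∈ ℤ^{E₊} is a 1-cycle (∂α = 0) then (I - T*)(α - ᾱ) = 0, where α - ᾱ is the
coefficient function λ with λ(x) = n_x, λ(x̄) = -n_x for x ∈ E₊. -/
theorem stmt_4 {V E : Type*} [Fintype V] [Fintype E] [DecidableEq V] [DecidableEq E]
    (bar : E → E) (o t : E → V)
    (hinv : ∀ x, bar (bar x) = x) (hfree : ∀ x, bar x ≠ x)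
    (hot : ∀ x, o (bar x) = t x)
    (Ep : Finset E) (hEp : ∀ x, x ∈ Ep ↔ bar x ∉ Ep)
    (n : E → ℤ)
    (hcycle : ∀ v : V, (∑ x ∈ Ep.filter (fun x => t x = v), n x)
      - (∑ x ∈ Ep.filter (fun x => o x = v), n x) = 0)
    (lam : E → ℤ)
    (hlam : ∀ x : E, lam x = if x ∈ Ep then n x else - n (bar x)) :
    ∀ z : E, lam z + lam (bar z)
      - (∑ x ∈ Finset.univ.filter (fun x => o x = t z), lam x) = 0 :=
  stmt_4_general bar o t hinv hot Ep hEp n hcycle lam hlam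
end

section
/- Let (V, E) be a finite connected graph with reversal involution, incidence maps o, t (o(x̄) = t(x)), and suppose every vertex has degree at least 3 (i.e., |{x : o(x) = v}| ≥ 3 for all v). Define T : ℤ^E → ℤ^E by T(x) = ∑_{y : o(y)=t(x), y ≠ x̄} y. If α = ∑_{x ∈ E} λ(x)·x satisfies (T - I)α = 0, then the quantity σ(y) := λ(y) + λ(ȳ) is constant over all y ∈ E. -/
/-!
Let `inflow v` be the sum of `λ` over the edges ending at `v`. Since `ȳ` is one of the edges
ending at `o y`, the kernel equation at `y` says exactly `λ y + λ ȳ = inflow (o y)`. Applying it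
to `ȳ` as well gives `inflow (o y) = inflow (t y)`, so `inflow` is constant along every edge,
hence constant on the connected graph, and so is `σ`.
-/

namespace EdgeSum

variable {V E : Type*} [Fintype E] [DecidableEq V] [DecidableEq E]

def inflow (t : E → V) (lam : E → ℤ) (v : V) : ℤ :=
  ∑ x ∈ Finset.univ.filter (fun x => t x = v), lam x

theorem add_bar_eq_inflow (bar : E → E) (o t : E → V) {y : E} (lam : E → ℤ)
    (htbar : t (bar y) = o y)
    (hker : (∑ x ∈ Finset.univ.filter (fun x => t x = o y ∧ x ≠ bar y), lam x) - lam y = 0) :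
    lam y + lam (bar y) = inflow t lam (o y) := by
  have hmem : bar y ∈ Finset.univ.filter (fun x => t x = o y) := by simp [htbar]
  have herase : Finset.univ.filter (fun x => t x = o y ∧ x ≠ bar y)
      = (Finset.univ.filter (fun x => t x = o y)).erase (bar y) := by
    ext x
    simp [and_comm]
  rw [inflow, ← Finset.add_sum_erase _ lam hmem, ← herase]
  omega

end EdgeSum

theorem Relation.ReflTransGen.eq_of_forall_eq {α β : Type*} {r : α → α → Prop} (f : α → β)
    (hf : ∀ a b, r a b → f a = f b) {a b : α} (h : Relation.ReflTransGen r a b) : f a = f b := by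
  have := h.lift f hf
  rwa [Relation.reflTransGen_eq_self] at this

theorem stmt_5_general {V E : Type*} [Fintype E] [DecidableEq V] [DecidableEq E]
    (bar : E → E) (o t : E → V)
    (hinv : ∀ x, bar (bar x) = x)
    (hot : ∀ x, o (bar x) = t x)
    (hconn : ∀ u v : V, Relation.ReflTransGen (fun a b => ∃ e : E, o e = a ∧ t e = b) u v)
    (lam : E → ℤ)
    (hker : ∀ y : E,
      (∑ x ∈ Finset.univ.filter (fun x => t x = o y ∧ x ≠ bar y), lam x) - lam y = 0) :
    ∀ y z : E, lam y + lam (bar y) = lam z + lam (bar z) := by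
  have htbar (y : E) : t (bar y) = o y := by rw [← hot, hinv]
  have hsigma (y : E) : lam y + lam (bar y) = EdgeSum.inflow t lam (o y) :=
    EdgeSum.add_bar_eq_inflow bar o t lam (htbar y) (hker y)
  have hedge (e : E) : EdgeSum.inflow t lam (o e) = EdgeSum.inflow t lam (t e) := by
    rw [← hsigma, ← hot, ← hsigma, hinv, add_comm]
  intro y z
  rw [hsigma, hsigma]
  exact (hconn _ _).eq_of_forall_eq _ fun _ _ ⟨e, he, he'⟩ => he ▸ he' ▸ hedge e

/-- In a finite connected graph with every vertex of degree ≥ 3, if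
α = ∑ λ(x)·x satisfies (T - I)α = 0 (coefficientwise:
∑_{x : t(x)=o(y), x ≠ ȳ} λ(x) - λ(y) = 0 for every y), then σ(y) = λ(y) + λ(ȳ)
is constant over all edges y. -/
theorem stmt_5 {V E : Type*} [Fintype V] [Fintype E] [DecidableEq V] [DecidableEq E]
    (bar : E → E) (o t : E → V)
    (hinv : ∀ x, bar (bar x) = x) (hfree : ∀ x, bar x ≠ x)
    (hot : ∀ x, o (bar x) = t x)
    (hconn : ∀ u v : V, Relation.ReflTransGen (fun a b => ∃ e : E, o e = a ∧ t e = b) u v)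
    (hdeg : ∀ v : V, 3 ≤ (Finset.univ.filter (fun x => o x = v)).card)
    (lam : E → ℤ)
    (hker : ∀ y : E,
      (∑ x ∈ Finset.univ.filter (fun x => t x = o y ∧ x ≠ bar y), lam x) - lam y = 0) :
    ∀ y z : E, lam y + lam (bar y) = lam z + lam (bar z) :=
  stmt_5_general bar o t hinv hot hconn lam hker
end

section
/- Let (V, E) be a finite connected graph with reversal involution, every vertex of degree at least 3, and nonzero Euler characteristic χ = |V| - |E|/2. Define T : ℤ^E → ℤ^E by T(x) = ∑_{y : o(y)=t(x), y ≠ x̄} y. Then the map α ↦ α - ᾱ (where the bar extends x ↦ x̄ linearly) is a group isomorphism from H₁(G, ℤ) = ker(∂ : ℤ^{E₊} → ℤ^V) onto ker(T - I) ⊆ ℤ^E. -/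
/-!
On an antisymmetric edge function `h` (one with `h x̄ = -h x`), the inflow `∑_{t x = v} h x` at a
vertex equals the boundary `(∂ α)(v)` of its restriction `α` to `E₊`. Since `T h (z)` is the inflow
at `o z` minus `h z̄`, the fixed-point equation `T h = h` for an antisymmetric `h` says exactly that
the inflow vanishes, i.e. that `α` is a cycle.

Conversely, let `T f = f` and write `g v` for the inflow of `f` at `v`. Then `g (o z) = f z + f z̄`,
which is symmetric in `z ↔ z̄`, so `g` is constant along edges and hence constant, say `c`, on the
connected graph. Counting `∑ f` once by heads and once by pairs gives `|V| c = ∑ f` and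
`|E| c = 2 ∑ f`, so `(2|V| - |E|) c = 0` and `c = 0` because `χ ≠ 0`. Thus `f` is antisymmetric and
comes from a cycle.
-/

open Finset

lemma Relation.ReflTransGen.eq_of_forall_rel {α β : Type*} {r : α → α → Prop} {g : α → β}
    (hg : ∀ a b, r a b → g a = g b) {u w : α} (huw : Relation.ReflTransGen r u w) :
    g u = g w := by
  induction huw with
  | refl => rfl
  | tail _ hab ih => exact ih.trans (hg _ _ hab)

lemma Finset.sum_filter_attach_eq {α M : Type*} [AddCommMonoid M] (s : Finset α)
    (n : s → M) (h : α → M) (hh : ∀ x (hx : x ∈ s), h x = n ⟨x, hx⟩)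
    (p : α → Prop) [DecidablePred p] :
    ∑ x ∈ s.attach.filter (fun x => p x.1), n x = ∑ x ∈ s.filter p, h x := by
  rw [sum_filter, sum_filter, ← sum_attach s]
  exact sum_congr rfl fun x _ => by rw [hh x.1 x.2]

section ReversalGraph

variable {V E : Type*} {bar : E → E} {o t : E → V} {Ep : Finset E}

lemma t_bar (hinv : Function.Involutive bar) (hot : ∀ x, o (bar x) = t x) (x : E) :
    t (bar x) = o x := by
  rw [← hot, hinv]

lemma bar_mem_of_not_mem (hEp : ∀ x, x ∈ Ep ↔ bar x ∉ Ep) {x : E} (hx : x ∉ Ep) :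
    bar x ∈ Ep :=
  of_not_not (mt (hEp x).2 hx)

lemma antisymm_of_forall_mem {G : Type*} [AddGroup G] (hinv : Function.Involutive bar)
    (hEp : ∀ x, x ∈ Ep ↔ bar x ∉ Ep) {h : E → G} (hh : ∀ x ∈ Ep, h (bar x) = -h x) (x : E) :
    h (bar x) = -h x := by
  by_cases hx : x ∈ Ep
  · exact hh x hx
  · have := hh (bar x) (bar_mem_of_not_mem hEp hx)
    rw [hinv] at this
    rw [this, neg_neg]

lemma eq_of_antisymm_of_eqOn {G : Type*} [AddGroup G] (hEp : ∀ x, x ∈ Ep ↔ bar x ∉ Ep)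
    {h₁ h₂ : E → G} (hh₁ : ∀ x, h₁ (bar x) = -h₁ x) (hh₂ : ∀ x, h₂ (bar x) = -h₂ x)
    (heq : ∀ x ∈ Ep, h₁ x = h₂ x) : h₁ = h₂ := by
  funext x
  by_cases hx : x ∈ Ep
  · exact heq x hx
  · have hb := heq (bar x) (bar_mem_of_not_mem hEp hx)
    rwa [hh₁, hh₂, neg_inj] at hb

variable [Fintype E] [DecidableEq V]

/-- The edges into `v` outside `E₊` are the reversals of the edges of `E₊` out of `v`. -/
lemma sum_filter_t_eq_of_antisymm (hinv : Function.Involutive bar)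
    (hot : ∀ x, o (bar x) = t x) (hEp : ∀ x, x ∈ Ep ↔ bar x ∉ Ep)
    {h : E → ℤ} (hh : ∀ x, h (bar x) = -h x) (v : V) :
    ∑ x ∈ univ.filter (fun x => t x = v), h x
      = ∑ x ∈ Ep.filter (fun x => t x = v), h x - ∑ x ∈ Ep.filter (fun x => o x = v), h x := by
  classical
  have hout : ∑ x ∈ (univ.filter (fun x => t x = v)).filter (· ∉ Ep), h x
      = ∑ x ∈ Ep.filter (fun x => o x = v), -h x := by
    refine sum_nbij' bar bar ?_ ?_ (fun a _ => hinv a) (fun a _ => hinv a)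
      (fun a _ => by rw [hh, neg_neg])
    · intro a ha
      simp only [mem_filter, mem_univ, true_and] at ha ⊢
      exact ⟨bar_mem_of_not_mem hEp ha.2, by rw [hot, ha.1]⟩
    · intro a ha
      simp only [mem_filter, mem_univ, true_and] at ha ⊢
      exact ⟨by rw [t_bar hinv hot, ha.2], (hEp a).1 ha.1⟩
  have hin : (univ.filter (fun x => t x = v)).filter (· ∈ Ep) = Ep.filter (fun x => t x = v) := by
    ext x; simp [and_comm]
  rw [← sum_filter_add_sum_filter_not _ (· ∈ Ep), hin, hout, sum_neg_distrib, sub_eq_add_neg]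

lemma inflow_eq_zero_of_fixed [Fintype V] (hinv : Function.Involutive bar)
    (hot : ∀ x, o (bar x) = t x)
    (hconn : ∀ u v : V, Relation.ReflTransGen (fun a b => ∃ e : E, o e = a ∧ t e = b) u v)
    (hchi : 2 * Fintype.card V ≠ Fintype.card E) {f : E → ℤ}
    (hf : ∀ z, ∑ x ∈ univ.filter (fun x => t x = o z), f x - f (bar z) = f z) (v : V) :
    ∑ x ∈ univ.filter (fun x => t x = v), f x = 0 := by
  set g : V → ℤ := fun v => ∑ x ∈ univ.filter (fun x => t x = v), f x
  have hg_o : ∀ z, g (o z) = f z + f (bar z) := fun z => by linarith [hf z]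
  have hg_edge : ∀ e, g (o e) = g (t e) := fun e => by
    rw [← hot e, hg_o, hg_o, hinv, add_comm]
  have hg_const : ∀ u, g u = g v := fun u =>
    (hconn u v).eq_of_forall_rel fun a b ⟨e, hoe, hte⟩ => hoe ▸ hte ▸ hg_edge e
  have hV : (Fintype.card V : ℤ) * g v = ∑ x, f x := by
    rw [← sum_fiberwise univ t f, sum_congr rfl fun u _ => hg_const u, sum_const, card_univ,
      nsmul_eq_mul]
  have hE : (Fintype.card E : ℤ) * g v = 2 * ∑ x, f x := by
    have hbar_sum : ∑ x, f (bar x) = ∑ x, f x := Equiv.sum_comp (hinv.toPerm bar) f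
    calc (Fintype.card E : ℤ) * g v = ∑ x, g (o x) := by
          rw [sum_congr rfl fun x _ => hg_const (o x), sum_const, card_univ, nsmul_eq_mul]
      _ = ∑ x, (f x + f (bar x)) := sum_congr rfl fun x _ => hg_o x
      _ = 2 * ∑ x, f x := by rw [sum_add_distrib, hbar_sum, two_mul]
  have hchi' : (2 * Fintype.card V : ℤ) - Fintype.card E ≠ 0 := by
    rw [sub_ne_zero]; exact_mod_cast hchi
  have : ((2 * Fintype.card V : ℤ) - Fintype.card E) * g v = 0 := by linear_combination 2 * hV - hE
  exact (mul_eq_zero.mp this).resolve_left hchi'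

end ReversalGraph

theorem stmt_6_general {V E : Type*} [Fintype V] [Fintype E] [DecidableEq V]
    (bar : E → E) (o t : E → V)
    (hinv : ∀ x, bar (bar x) = x)
    (hot : ∀ x, o (bar x) = t x)
    (hconn : ∀ u v : V, Relation.ReflTransGen (fun a b => ∃ e : E, o e = a ∧ t e = b) u v)
    (hchi : 2 * Fintype.card V ≠ Fintype.card E)
    (Ep : Finset E) (hEp : ∀ x, x ∈ Ep ↔ bar x ∉ Ep)
    (Φ : ({x // x ∈ Ep} → ℤ) → (E → ℤ))
    (hΦ1 : ∀ (n : {x // x ∈ Ep} → ℤ) (x : E) (hx : x ∈ Ep), Φ n x = n ⟨x, hx⟩)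
    (hΦ2 : ∀ (n : {x // x ∈ Ep} → ℤ) (x : E) (hx : x ∈ Ep), Φ n (bar x) = - n ⟨x, hx⟩) :
    (∀ n m : {x // x ∈ Ep} → ℤ, Φ (n + m) = Φ n + Φ m) ∧
    (∀ n : {x // x ∈ Ep} → ℤ,
      (∀ v : V, (∑ x ∈ Ep.attach.filter (fun x => t x.1 = v), n x)
        - (∑ x ∈ Ep.attach.filter (fun x => o x.1 = v), n x) = 0) →
      (∀ z : E, (∑ x ∈ Finset.univ.filter (fun x => t x = o z), Φ n x) - Φ n (bar z) = Φ n z)) ∧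
    (∀ n m : {x // x ∈ Ep} → ℤ,
      (∀ v : V, (∑ x ∈ Ep.attach.filter (fun x => t x.1 = v), n x)
        - (∑ x ∈ Ep.attach.filter (fun x => o x.1 = v), n x) = 0) →
      (∀ v : V, (∑ x ∈ Ep.attach.filter (fun x => t x.1 = v), m x)
        - (∑ x ∈ Ep.attach.filter (fun x => o x.1 = v), m x) = 0) →
      Φ n = Φ m → n = m) ∧
    (∀ f : E → ℤ,
      (∀ z : E, (∑ x ∈ Finset.univ.filter (fun x => t x = o z), f x) - f (bar z) = f z) →
      ∃ n : {x // x ∈ Ep} → ℤ,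
        (∀ v : V, (∑ x ∈ Ep.attach.filter (fun x => t x.1 = v), n x)
          - (∑ x ∈ Ep.attach.filter (fun x => o x.1 = v), n x) = 0) ∧ Φ n = f) := by
  have hΦbar (n : {x // x ∈ Ep} → ℤ) : ∀ x, Φ n (bar x) = -Φ n x :=
    antisymm_of_forall_mem hinv hEp fun x hx => by rw [hΦ1 n x hx, hΦ2 n x hx]
  have hflux (h : E → ℤ) (n : {x // x ∈ Ep} → ℤ) (hn : ∀ x hx, h x = n ⟨x, hx⟩)
      (hh : ∀ x, h (bar x) = -h x) (v : V) :
      ∑ x ∈ univ.filter (fun x => t x = v), h x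
        = ∑ x ∈ Ep.attach.filter (fun x => t x.1 = v), n x
          - ∑ x ∈ Ep.attach.filter (fun x => o x.1 = v), n x := by
    rw [sum_filter_attach_eq Ep n h hn (fun x => t x = v),
      sum_filter_attach_eq Ep n h hn (fun x => o x = v),
      sum_filter_t_eq_of_antisymm hinv hot hEp hh]
  refine ⟨fun n m => ?_, fun n hn z => ?_, fun n m _ _ hnm => ?_, fun f hf => ?_⟩
  · refine eq_of_antisymm_of_eqOn hEp (hΦbar _) (fun x => ?_) fun x hx => ?_
    · simp only [Pi.add_apply, hΦbar, neg_add]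
    · simp only [Pi.add_apply, hΦ1 _ x hx]
  · rw [hflux (Φ n) n (hΦ1 n) (hΦbar n), hn, hΦbar, zero_sub, neg_neg]
  · funext x
    simpa only [hΦ1 _ x.1 x.2] using congrFun hnm x.1
  · have hf0 := inflow_eq_zero_of_fixed hinv hot hconn hchi hf
    have hfbar (z) : f (bar z) = -f z := by linarith [hf z, hf0 (o z)]
    refine ⟨fun x => f x.1, fun v => ?_, ?_⟩
    · rw [← hflux f _ (fun _ _ => rfl) hfbar, hf0]
    · exact eq_of_antisymm_of_eqOn hEp (hΦbar _) hfbar fun x hx => hΦ1 _ x hx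

/-- For a finite connected graph with all vertex degrees ≥ 3 and nonzero Euler
characteristic, the map α ↦ α - ᾱ is a group isomorphism from
H₁(G, ℤ) = ker(∂ : ℤ^{E₊} → ℤ^V) onto ker(T - I) ⊆ ℤ^E, where
T(x) = ∑_{y : o(y)=t(x), y ≠ x̄} y, i.e. (T f)(z) = ∑_{x : t(x)=o(z)} f(x) - f(z̄).
The map Φ is characterized by Φ(n)(x) = n(x), Φ(n)(x̄) = -n(x) for x ∈ E₊; it is additive,
maps cycles to ker(T - I), and is injective and surjective between those groups. -/
theorem stmt_6 {V E : Type*} [Fintype V] [Fintype E] [DecidableEq V] [DecidableEq E]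
    (bar : E → E) (o t : E → V)
    (hinv : ∀ x, bar (bar x) = x) (hfree : ∀ x, bar x ≠ x)
    (hot : ∀ x, o (bar x) = t x)
    (hconn : ∀ u v : V, Relation.ReflTransGen (fun a b => ∃ e : E, o e = a ∧ t e = b) u v)
    (hdeg : ∀ v : V, 3 ≤ (Finset.univ.filter (fun x => o x = v)).card)
    (hchi : 2 * Fintype.card V ≠ Fintype.card E)
    (Ep : Finset E) (hEp : ∀ x, x ∈ Ep ↔ bar x ∉ Ep)
    (Φ : ({x // x ∈ Ep} → ℤ) → (E → ℤ))
    (hΦ1 : ∀ (n : {x // x ∈ Ep} → ℤ) (x : E) (hx : x ∈ Ep), Φ n x = n ⟨x, hx⟩)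
    (hΦ2 : ∀ (n : {x // x ∈ Ep} → ℤ) (x : E) (hx : x ∈ Ep), Φ n (bar x) = - n ⟨x, hx⟩) :
    (∀ n m : {x // x ∈ Ep} → ℤ, Φ (n + m) = Φ n + Φ m) ∧
    (∀ n : {x // x ∈ Ep} → ℤ,
      (∀ v : V, (∑ x ∈ Ep.attach.filter (fun x => t x.1 = v), n x)
        - (∑ x ∈ Ep.attach.filter (fun x => o x.1 = v), n x) = 0) →
      (∀ z : E, (∑ x ∈ Finset.univ.filter (fun x => t x = o z), Φ n x) - Φ n (bar z) = Φ n z)) ∧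
    (∀ n m : {x // x ∈ Ep} → ℤ,
      (∀ v : V, (∑ x ∈ Ep.attach.filter (fun x => t x.1 = v), n x)
        - (∑ x ∈ Ep.attach.filter (fun x => o x.1 = v), n x) = 0) →
      (∀ v : V, (∑ x ∈ Ep.attach.filter (fun x => t x.1 = v), m x)
        - (∑ x ∈ Ep.attach.filter (fun x => o x.1 = v), m x) = 0) →
      Φ n = Φ m → n = m) ∧
    (∀ f : E → ℤ,
      (∀ z : E, (∑ x ∈ Finset.univ.filter (fun x => t x = o z), f x) - f (bar z) = f z) →
      ∃ n : {x // x ∈ Ep} → ℤ,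
        (∀ v : V, (∑ x ∈ Ep.attach.filter (fun x => t x.1 = v), n x)
          - (∑ x ∈ Ep.attach.filter (fun x => o x.1 = v), n x) = 0) ∧ Φ n = f) :=
  stmt_6_general bar o t hinv hot hconn hchi Ep hEp Φ hΦ1 hΦ2
end
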